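/- The boundary Fourier multiplier is second order: for ξ > 0, h > 0, k > 0 with sin(kh) ≠ 0 and ξ ≠ k, and L > 0, the quantity B_h = √(2/L) · (h/sin(kh)) · (kh·sin(ξh) − ξh·sin(kh))/((ξh)² − (kh)²) satisfies |B_h| ≤ √(2Θ(kh)/L) · (ξh²/6) · |sec(kh/2)|, where Θ(s) = s²/(4 sin²(s/2)). -/

import Mathlib

lemma abs_sin_sub_mul_cos_le (x : ℝ) (hx : 0 ≤ x) :
    |Real.sin x - x * Real.cos x| ≤ x ^ 3 / 3 := by
  have hd : ∀ t ∈ Set.uIcc 0 x, HasDerivAt (fun t => Real.sin t - t * Real.cos t)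
      (t * Real.sin t) t := by
    intro t _
    have h2 : HasDerivAt (fun t : ℝ => t * Real.cos t)
        (1 * Real.cos t + t * (-Real.sin t)) t :=
      (hasDerivAt_id t).mul (Real.hasDerivAt_cos t)
    have := (Real.hasDerivAt_sin t).sub h2
    exact this.congr_deriv (by ring)
  have hint : ∫ t in (0:ℝ)..x, t * Real.sin t
      = (Real.sin x - x * Real.cos x) - (Real.sin 0 - 0 * Real.cos 0) := by
    apply intervalIntegral.integral_eq_sub_of_hasDerivAt hd
    exact (continuous_id.mul Real.continuous_sin).intervalIntegrable 0 x
  have hb : |∫ t in (0:ℝ)..x, t * Real.sin t| ≤ |∫ t in (0:ℝ)..x, t ^ 2| := by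
    rw [← Real.norm_eq_abs]
    apply intervalIntegral.norm_integral_le_abs_of_norm_le
    · filter_upwards with t
      calc ‖t * Real.sin t‖ = |t| * |Real.sin t| := abs_mul _ _
        _ ≤ |t| * |t| := mul_le_mul_of_nonneg_left (Real.abs_sin_le_abs) (abs_nonneg t)
        _ = t ^ 2 := by rw [← abs_mul, ← sq, abs_of_nonneg (sq_nonneg t)]
    · exact (continuous_pow 2).intervalIntegrable 0 x
  have hval : ∫ t in (0:ℝ)..x, t ^ 2 = x ^ 3 / 3 := by
    simp [integral_pow]; ring
  simp only [Real.sin_zero, zero_mul, Real.cos_zero, sub_zero] at hint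
  calc |Real.sin x - x * Real.cos x| = |∫ t in (0:ℝ)..x, t * Real.sin t| := by rw [hint]
    _ ≤ |∫ t in (0:ℝ)..x, t ^ 2| := hb
    _ = x ^ 3 / 3 := by rw [hval, abs_of_nonneg (by positivity : (0:ℝ) ≤ x ^ 3 / 3)]

lemma sinc_diff_le (a b : ℝ) (ha : 0 < a) (hb : 0 < b) :
    |Real.sin a / a - Real.sin b / b| ≤ |a ^ 2 - b ^ 2| / 6 := by
  set F : ℝ → ℝ := fun t => Real.sin (Real.sqrt t) / Real.sqrt t with hF
  set F' : ℝ → ℝ := fun t =>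
    (Real.cos (Real.sqrt t) * (1 / (2 * Real.sqrt t)) * Real.sqrt t
      - Real.sin (Real.sqrt t) * (1 / (2 * Real.sqrt t))) / (Real.sqrt t) ^ 2 with hF'
  have hderiv : ∀ t ∈ Set.Ioi (0:ℝ), HasDerivWithinAt F (F' t) (Set.Ioi 0) t := by
    intro t ht
    have ht0 : (0:ℝ) < t := ht
    have hs : Real.sqrt t ≠ 0 := (Real.sqrt_pos.mpr ht0).ne'
    have h1 : HasDerivAt Real.sqrt (1 / (2 * Real.sqrt t)) t := Real.hasDerivAt_sqrt ht0.ne'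
    have h2 : HasDerivAt (fun t => Real.sin (Real.sqrt t))
        (Real.cos (Real.sqrt t) * (1 / (2 * Real.sqrt t))) t :=
      (Real.hasDerivAt_sin _).comp t h1
    exact ((h2.div h1 hs)).hasDerivWithinAt
  have hbound : ∀ t ∈ Set.Ioi (0:ℝ), ‖F' t‖ ≤ 1/6 := by
    intro t ht
    have ht0 : (0:ℝ) < t := ht
    have hs : 0 < Real.sqrt t := Real.sqrt_pos.mpr ht0
    set u := Real.sqrt t with hu
    have hFu : F' t = (u * Real.cos u - Real.sin u) / (2 * u ^ 3) := by
      rw [hF']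
      simp only [← hu]
      field_simp
    rw [Real.norm_eq_abs, hFu, abs_div, abs_of_pos (by positivity : (0:ℝ) < 2 * u ^ 3)]
    rw [div_le_iff₀ (by positivity)]
    have := abs_sin_sub_mul_cos_le u hs.le
    rw [abs_sub_comm] at this
    calc |u * Real.cos u - Real.sin u| ≤ u ^ 3 / 3 := this
      _ = 1/6 * (2 * u ^ 3) := by ring
  have key := (convex_Ioi (0:ℝ)).norm_image_sub_le_of_norm_hasDerivWithin_le
    hderiv hbound (Set.mem_Ioi.mpr (by positivity : (0:ℝ) < b ^ 2))
    (Set.mem_Ioi.mpr (by positivity : (0:ℝ) < a ^ 2))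
  have hFa : F (a ^ 2) = Real.sin a / a := by
    rw [hF]; simp [Real.sqrt_sq ha.le]
  have hFb : F (b ^ 2) = Real.sin b / b := by
    rw [hF]; simp [Real.sqrt_sq hb.le]
  rw [hFa, hFb, Real.norm_eq_abs, Real.norm_eq_abs] at key
  linarith [key]
theorem boundary_multiplier_bound (ξ h k L : ℝ) (hξ : 0 < ξ) (hh : 0 < h) (hk : 0 < k)
    (hL : 0 < L) (hsin : Real.sin (k * h) ≠ 0) (hne : ξ ≠ k) :
    |Real.sqrt (2 / L) * (h / Real.sin (k * h))
        * ((k * h * Real.sin (ξ * h) - ξ * h * Real.sin (k * h))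
            / ((ξ * h) ^ 2 - (k * h) ^ 2))|
      ≤ Real.sqrt (2 * ((k * h) ^ 2 / (4 * Real.sin (k * h / 2) ^ 2)) / L)
          * (ξ * h ^ 2 / 6) * |1 / Real.cos (k * h / 2)| := by
  set A := ξ * h with hAdef
  set B := k * h with hBdef
  have hA : 0 < A := mul_pos hξ hh
  have hB : 0 < B := mul_pos hk hh
  have hABne : A ≠ B := fun e => hne (mul_right_cancel₀ hh.ne' e)
  have hsq : A ^ 2 - B ^ 2 ≠ 0 := by
    intro e
    have h0 : (A - B) * (A + B) = 0 := by linear_combination e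
    rcases mul_eq_zero.mp h0 with h1 | h2
    · exact hABne (by linarith)
    · linarith
  set s := Real.sin (B / 2) with hsdef
  set c := Real.cos (B / 2) with hcdef
  have hsc : Real.sin B = 2 * s * c := by
    rw [hsdef, hcdef, ← Real.sin_two_mul]; ring_nf
  have hs0 : s ≠ 0 := fun e => hsin (by rw [hsc, e]; ring)
  have hc0 : c ≠ 0 := fun e => hsin (by rw [hsc, e]; ring)
  have hsinB : Real.sin B ≠ 0 := hsin
  set D := |Real.sin A / A - Real.sin B / B| with hDdef
  have key : D ≤ |A ^ 2 - B ^ 2| / 6 := sinc_diff_le A B hA hB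
  have hnum : B * Real.sin A - A * Real.sin B
      = A * B * (Real.sin A / A - Real.sin B / B) := by
    field_simp
  have hS : (0:ℝ) ≤ Real.sqrt (2 / L) := Real.sqrt_nonneg _
  have hLHS : |Real.sqrt (2 / L) * (h / Real.sin B)
      * ((B * Real.sin A - A * Real.sin B) / (A ^ 2 - B ^ 2))|
      = Real.sqrt (2 / L) * (h / |Real.sin B|) * (A * B * D / |A ^ 2 - B ^ 2|) := by
    rw [hnum, abs_mul, abs_mul, abs_div, abs_div, abs_mul, abs_mul]
    rw [abs_of_nonneg hS, abs_of_pos hh, abs_of_pos hA, abs_of_pos hB]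
  have hstep : A * B * D / |A ^ 2 - B ^ 2| ≤ A * B / 6 := by
    rw [div_le_iff₀ (abs_pos.mpr hsq)]
    calc A * B * D ≤ A * B * (|A ^ 2 - B ^ 2| / 6) :=
          mul_le_mul_of_nonneg_left key (by positivity)
      _ = A * B / 6 * |A ^ 2 - B ^ 2| := by ring
  have habs2 : |Real.sin B| = 2 * |s| * |c| := by
    rw [hsc, abs_mul, abs_mul, abs_two]
  calc |Real.sqrt (2 / L) * (h / Real.sin B)
      * ((B * Real.sin A - A * Real.sin B) / (A ^ 2 - B ^ 2))|
      = Real.sqrt (2 / L) * (h / |Real.sin B|) * (A * B * D / |A ^ 2 - B ^ 2|) := hLHS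
    _ ≤ Real.sqrt (2 / L) * (h / |Real.sin B|) * (A * B / 6) :=
        mul_le_mul_of_nonneg_left hstep (by positivity)
    _ = Real.sqrt (2 * (B ^ 2 / (4 * s ^ 2)) / L) * (ξ * h ^ 2 / 6) * |1 / c| := by
        have e1 : 2 * (B ^ 2 / (4 * s ^ 2)) / L = 2 / L * (B / (2 * s)) ^ 2 := by
          field_simp; ring
        rw [e1, Real.sqrt_mul (by positivity), Real.sqrt_sq_eq_abs, habs2,
          abs_div, abs_of_pos hB, abs_mul, abs_two, abs_div, abs_one, hAdef]
        have hsa : |s| ≠ 0 := abs_ne_zero.mpr hs0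
        have hca : |c| ≠ 0 := abs_ne_zero.mpr hc0
        field_simp
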